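/- Chatterjee–Diaconis style importance sampling L1 error bound (finite-space version): let p, q be probability mass functions on a finite set X with p ≪ q, φ : X → [0,1], r* = E_p[φ], and let r be the average of n = ⌈exp(L + c)⌉ i.i.d. importance-sampled terms φ(Xᵢ)p(Xᵢ)/q(Xᵢ) with Xᵢ ~ q, where L = D(p‖q) and c ≥ 0. Then E|r − r*| ≤ √(E_p[φ²]) · ( e^{−c/4} + 2·√( P_p( log(p(X)/q(X)) > L + c/2 ) ) ). -/

import Mathlib

/-!
Split the importance weight `f = φ p / q` at the threshold `log (p / q) = L + c / 2` into a bulk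
part `h` and a nonnegative tail `f - h`. A nonnegative error term costs at most twice its mean in
L¹, and by Cauchy–Schwarz the mean of the tail, `∑_{tail} φ p`, is at most
`√(E_p φ²) √(P_p tail)`. On the bulk `p / q ≤ exp (L + c / 2)`, so `E_q h² ≤ exp (L + c / 2) E_p φ²`,
and the sample mean of `h` deviates in L¹ by at most its standard deviation
`√(E_q h² / n) ≤ exp (-c / 4) √(E_p φ²)`, since `n ≥ exp (L + c)`.
-/

open MeasureTheory ProbabilityTheory Real

section SampleMean

variable {Ω : Type*} [MeasurableSpace Ω] {μ : Measure Ω} [IsProbabilityMeasure μ]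

theorem integral_abs_sub_integral_le_sqrt_variance {Y : Ω → ℝ} (hY : MemLp Y 2 μ) :
    ∫ ω, |Y ω - μ[Y]| ∂μ ≤ √(Var[Y; μ]) := by
  set W : Ω → ℝ := fun ω => Y ω - μ[Y]
  have hW : MemLp |W| 2 μ := (hY.sub (memLp_const _)).abs
  have hsq : (∫ ω, |W ω| ∂μ) ^ 2 ≤ ∫ ω, W ω ^ 2 ∂μ := by
    have := variance_nonneg |W| μ
    rw [variance_eq_sub hW] at this
    simpa [sq_abs] using this
  rw [variance_eq_integral hY.aemeasurable]
  exact le_sqrt_of_sq_le hsq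

theorem integral_abs_sampleMean_sub_le {n : ℕ} (hn : 0 < n) {Y : Fin n → Ω → ℝ}
    (hY : ∀ i, MemLp (Y i) 2 μ) (hindep : Pairwise fun i j => Y i ⟂ᵢ[μ] Y j)
    {m s : ℝ} (hm : ∀ i, μ[Y i] = m) (hs : ∀ i, Var[Y i; μ] ≤ s) :
    ∫ ω, |1 / (n : ℝ) * ∑ i, Y i ω - m| ∂μ ≤ √(s / n) := by
  have hsum : (fun ω => ∑ i, Y i ω) = ∑ i, Y i := by ext; simp
  have hS : MemLp (fun ω => 1 / (n : ℝ) * ∑ i, Y i ω) 2 μ :=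
    (memLp_finsetSum _ fun i _ => hY i).const_mul _
  have hmean : μ[fun ω => 1 / (n : ℝ) * ∑ i, Y i ω] = m := by
    rw [integral_const_mul, integral_finsetSum _ fun i _ => (hY i).integrable one_le_two]
    simp only [one_div, hm, Finset.sum_const, Finset.card_univ, Fintype.card_fin, nsmul_eq_mul]
    field_simp
  have hvar : Var[fun ω => 1 / (n : ℝ) * ∑ i, Y i ω; μ] ≤ s / n := by
    rw [variance_const_mul, hsum,
      IndepFun.variance_sum (fun i _ => hY i) fun i _ j _ hij => hindep hij]
    calc (1 / (n : ℝ)) ^ 2 * ∑ i, Var[Y i; μ] ≤ (1 / (n : ℝ)) ^ 2 * ∑ _i : Fin n, s := by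
          gcongr with i; exact hs i
      _ = s / n := by
          simp only [one_div, inv_pow, Finset.sum_const, Finset.card_univ, Fintype.card_fin,
            nsmul_eq_mul]
          field_simp
  calc ∫ ω, |1 / (n : ℝ) * ∑ i, Y i ω - m| ∂μ
      ≤ √(Var[fun ω => 1 / (n : ℝ) * ∑ i, Y i ω; μ]) := by
        simpa only [hmean] using integral_abs_sub_integral_le_sqrt_variance hS
    _ ≤ √(s / n) := Real.sqrt_le_sqrt hvar

theorem integral_abs_sub_integral_le_of_le {Y Z : Ω → ℝ} (hY : Integrable Y μ)
    (hZ : Integrable Z μ) (hZY : ∀ ω, Z ω ≤ Y ω) :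
    ∫ ω, |Y ω - μ[Y]| ∂μ ≤ ∫ ω, |Z ω - μ[Z]| ∂μ + 2 * (μ[Y] - μ[Z]) := by
  have hmean : μ[Z] ≤ μ[Y] := integral_mono hZ hY hZY
  have hpt : ∀ ω, |Y ω - μ[Y]| ≤ |Z ω - μ[Z]| + ((Y ω - Z ω) + (μ[Y] - μ[Z])) := fun ω => by
    rw [abs_le]
    constructor <;> cases abs_cases (Z ω - μ[Z]) <;> linarith [hZY ω]
  have hZdev : Integrable (fun ω => |Z ω - μ[Z]|) μ := (hZ.sub (integrable_const _)).abs
  have hYZ : Integrable (fun ω => Y ω - Z ω) μ := hY.sub hZ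
  have hrest : Integrable (fun ω => (Y ω - Z ω) + (μ[Y] - μ[Z])) μ := hYZ.add (integrable_const _)
  calc ∫ ω, |Y ω - μ[Y]| ∂μ
      ≤ ∫ ω, |Z ω - μ[Z]| + ((Y ω - Z ω) + (μ[Y] - μ[Z])) ∂μ :=
        integral_mono (hY.sub (integrable_const _)).abs (hZdev.add hrest) hpt
    _ = ∫ ω, |Z ω - μ[Z]| ∂μ + 2 * (μ[Y] - μ[Z]) := by
        rw [integral_add hZdev hrest, integral_add hYZ (integrable_const _), integral_sub hY hZ,
          integral_const, probReal_univ, one_smul]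
        ring

end SampleMean

section FiniteLaw

variable {X : Type*} [Fintype X] [MeasurableSpace X] [MeasurableSingletonClass X]
  {Ω : Type*} [MeasurableSpace Ω] {μ : Measure Ω} [IsProbabilityMeasure μ] {q : X → ℝ}

theorem memLp_comp_of_fintype {T : Ω → X} (hT : Measurable T) (g : X → ℝ) (r : ENNReal) :
    MemLp (fun ω => g (T ω)) r μ :=
  (memLp_map_measure_iff (measurable_of_countable g).aestronglyMeasurable hT.aemeasurable).1
    MemLp.of_discrete

theorem integral_comp_eq_sum_of_law {T : Ω → X} (hT : Measurable T) (hq0 : ∀ x, 0 ≤ q x)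
    (hlaw : ∀ x, μ {ω | T ω = x} = ENNReal.ofReal (q x)) (g : X → ℝ) :
    ∫ ω, g (T ω) ∂μ = ∑ x, q x * g x := by
  rw [← integral_map hT.aemeasurable (measurable_of_countable g).aestronglyMeasurable,
    integral_fintype .of_finite]
  refine Finset.sum_congr rfl fun x _ => ?_
  rw [measureReal_def, Measure.map_apply hT (measurableSet_singleton x)]
  simp only [Set.preimage, Set.mem_singleton_iff, hlaw x, smul_eq_mul,
    ENNReal.toReal_ofReal (hq0 x)]

variable {n : ℕ} {Xs : Fin n → Ω → X}

theorem integrable_sampleMean_comp (hmeas : ∀ i, Measurable (Xs i)) (g : X → ℝ) :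
    Integrable (fun ω => 1 / (n : ℝ) * ∑ i, g (Xs i ω)) μ :=
  (integrable_finsetSum _ fun i _ =>
    (memLp_comp_of_fintype (hmeas i) g 1).integrable le_rfl).const_mul _

theorem integral_sampleMean_comp (hn : 0 < n) (hmeas : ∀ i, Measurable (Xs i))
    (hq0 : ∀ x, 0 ≤ q x) (hlaw : ∀ i x, μ {ω | Xs i ω = x} = ENNReal.ofReal (q x)) (g : X → ℝ) :
    ∫ ω, 1 / (n : ℝ) * ∑ i, g (Xs i ω) ∂μ = ∑ x, q x * g x := by
  rw [integral_const_mul, integral_finsetSum _ fun i _ =>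
    (memLp_comp_of_fintype (hmeas i) g 1).integrable le_rfl]
  simp only [integral_comp_eq_sum_of_law (hmeas _) hq0 (hlaw _), Finset.sum_const,
    Finset.card_univ, Fintype.card_fin, nsmul_eq_mul]
  field_simp

theorem integral_abs_sampleMean_comp_sub_le (hn : 0 < n) (hmeas : ∀ i, Measurable (Xs i))
    (hindep : iIndepFun Xs μ) (hq0 : ∀ x, 0 ≤ q x)
    (hlaw : ∀ i x, μ {ω | Xs i ω = x} = ENNReal.ofReal (q x)) (g : X → ℝ) :
    ∫ ω, |1 / (n : ℝ) * ∑ i, g (Xs i ω) - ∑ x, q x * g x| ∂μ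
      ≤ √((∑ x, q x * g x ^ 2) / n) := by
  refine integral_abs_sampleMean_sub_le hn (fun i => memLp_comp_of_fintype (hmeas i) g 2)
    (fun i j hij => (hindep.indepFun hij).comp (measurable_of_countable g)
      (measurable_of_countable g))
    (fun i => integral_comp_eq_sum_of_law (hmeas i) hq0 (hlaw i) g) fun i => ?_
  calc Var[fun ω => g (Xs i ω); μ] ≤ μ[(fun ω => g (Xs i ω)) ^ 2] :=
        variance_le_expectation_sq (memLp_comp_of_fintype (hmeas i) g 2).aestronglyMeasurable
    _ = ∑ x, q x * g x ^ 2 :=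
        integral_comp_eq_sum_of_law (hmeas i) hq0 (hlaw i) (fun x => g x ^ 2)

end FiniteLaw

section ImportanceWeights

variable {X : Type*} [Fintype X] {p q : X → ℝ}

theorem sum_mul_sub_sum_mul_ite_div (hpq : ∀ x, q x = 0 → p x = 0) (A : X → Prop)
    [DecidablePred A] (w : X → ℝ) :
    ∑ x, w x * p x - ∑ x, q x * (if A x then 0 else w x * p x / q x)
      = ∑ x, if A x then w x * p x else 0 := by
  rw [← Finset.sum_sub_distrib]
  refine Finset.sum_congr rfl fun x _ => ?_
  split_ifs
  · ring
  · rw [mul_div_cancel_of_imp' fun hq => by rw [hpq x hq, mul_zero], sub_self]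

theorem sum_ite_mul_le_sqrt_mul_sqrt (hp0 : ∀ x, 0 ≤ p x) (A : X → Prop) [DecidablePred A]
    (w : X → ℝ) :
    ∑ x, (if A x then w x * p x else 0)
      ≤ √(∑ x, w x ^ 2 * p x) * √(∑ x, if A x then p x else 0) := by
  have hsplit : ∀ x, (if A x then w x * p x else 0)
      = w x * √(p x) * (if A x then √(p x) else 0) := fun x => by
    split_ifs <;> simp [mul_assoc, Real.mul_self_sqrt (hp0 x)]
  have hw : ∀ x, (w x * √(p x)) ^ 2 = w x ^ 2 * p x := fun x => by
    rw [mul_pow, Real.sq_sqrt (hp0 x)]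
  have hA : ∀ x, (if A x then √(p x) else 0) ^ 2 = if A x then p x else 0 := fun x => by
    split_ifs <;> simp [Real.sq_sqrt (hp0 x)]
  simpa only [← hsplit, hw, hA] using Real.sum_mul_le_sqrt_mul_sqrt Finset.univ
    (fun x => w x * √(p x)) (fun x => if A x then √(p x) else 0)

theorem sum_mul_sq_ite_div_le (hp0 : ∀ x, 0 ≤ p x) (M : ℝ) (w : X → ℝ) :
    ∑ x, q x * (if Real.log (p x / q x) > M then 0 else w x * p x / q x) ^ 2
      ≤ Real.exp M * ∑ x, w x ^ 2 * p x := by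
  rw [Finset.mul_sum]
  refine Finset.sum_le_sum fun x _ => ?_
  split_ifs with hM
  · rw [zero_pow two_ne_zero, mul_zero]
    have := hp0 x
    positivity
  · have hratio : p x / q x ≤ Real.exp M :=
      (Real.le_exp_log _).trans (Real.exp_le_exp.2 (not_lt.1 hM))
    -- also at `q x = 0`, where both sides vanish because `p x / 0 = 0`
    calc q x * (w x * p x / q x) ^ 2 = w x ^ 2 * p x * (p x / q x) := by
          rcases eq_or_ne (q x) 0 with hq | hq
          · simp [hq]
          · field_simp
      _ ≤ w x ^ 2 * p x * Real.exp M := by have := hp0 x; gcongr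
      _ = Real.exp M * (w x ^ 2 * p x) := mul_comm _ _

end ImportanceWeights

theorem sqrt_exp_mul_div_le {L c S : ℝ} {n : ℕ} (hn : Real.exp (L + c) ≤ n) (hS : 0 ≤ S) :
    √(Real.exp (L + c / 2) * S / n) ≤ Real.exp (-c / 4) * √S := by
  have hn0 : (0 : ℝ) < n := (Real.exp_pos _).trans_le hn
  have hexp : Real.exp (L + c / 2) = Real.exp (-c / 4) ^ 2 * Real.exp (L + c) := by
    rw [← Real.exp_nat_mul, ← Real.exp_add]; ring_nf
  rw [← Real.sqrt_sq (Real.exp_pos (-c / 4)).le, ← Real.sqrt_mul (sq_nonneg _)]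
  refine Real.sqrt_le_sqrt ?_
  rw [div_le_iff₀ hn0, hexp]
  have := Real.exp_pos (-c / 4)
  calc Real.exp (-c / 4) ^ 2 * Real.exp (L + c) * S ≤ Real.exp (-c / 4) ^ 2 * n * S := by gcongr
    _ = Real.exp (-c / 4) ^ 2 * S * n := by ring

theorem chatterjee_diaconis_l1_bound_general {X : Type*} [Fintype X] [MeasurableSpace X]
    [MeasurableSingletonClass X]
    {Ω : Type*} [MeasurableSpace Ω] (μ : Measure Ω) [IsProbabilityMeasure μ]
    (p q : X → ℝ) (φ : X → ℝ) (c : ℝ) (n : ℕ)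
    (hp0 : ∀ x, 0 ≤ p x) (hq0 : ∀ x, 0 ≤ q x)
    (hsupp : ∀ x, 0 < p x → 0 < q x)
    (hφ : ∀ x, φ x ∈ Set.Icc (0 : ℝ) 1)
    (L : ℝ)
    (hn : Real.exp (L + c) ≤ n)
    (Xs : Fin n → Ω → X)
    (hmeas : ∀ i, Measurable (Xs i))
    (hindep : iIndepFun Xs μ)
    (hlaw : ∀ i x, μ {ω | Xs i ω = x} = ENNReal.ofReal (q x)) :
    ∫ ω, |(1 / (n : ℝ)) * ∑ i, φ (Xs i ω) * p (Xs i ω) / q (Xs i ω)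
        - ∑ x, φ x * p x| ∂μ
      ≤ Real.sqrt (∑ x, φ x ^ 2 * p x) *
        (Real.exp (-c / 4) +
          2 * Real.sqrt (∑ x, (if Real.log (p x / q x) > L + c / 2 then p x else 0))) := by
  have hn0 : 0 < n := by exact_mod_cast (Real.exp_pos _).trans_le hn
  have hpq : ∀ x, q x = 0 → p x = 0 := fun x hq =>
    (hp0 x).eq_or_lt.elim Eq.symm fun hp => absurd hq (hsupp x hp).ne'
  set A : X → Prop := fun x => Real.log (p x / q x) > L + c / 2
  set f : X → ℝ := fun x => φ x * p x / q x
  set h : X → ℝ := fun x => if A x then 0 else f x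
  have hmean : ∑ x, q x * f x = ∑ x, φ x * p x :=
    Finset.sum_congr rfl fun x _ => mul_div_cancel_of_imp' fun hq => by rw [hpq x hq, mul_zero]
  have hhf : ∀ x, h x ≤ f x := fun x => by
    by_cases hx : A x
    · simpa [h, hx] using div_nonneg (mul_nonneg (hφ x).1 (hp0 x)) (hq0 x)
    · simp [h, hx]
  have htrunc := integral_abs_sub_integral_le_of_le (μ := μ) (integrable_sampleMean_comp hmeas f)
    (integrable_sampleMean_comp hmeas h) fun ω => by gcongr with i; exact hhf _
  rw [integral_sampleMean_comp hn0 hmeas hq0 hlaw, integral_sampleMean_comp hn0 hmeas hq0 hlaw,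
    hmean, sum_mul_sub_sum_mul_ite_div hpq A φ] at htrunc
  have hsecond := sum_mul_sq_ite_div_le (q := q) hp0 (L + c / 2) φ
  have hbulk := (integral_abs_sampleMean_comp_sub_le hn0 hmeas hindep hq0 hlaw h).trans <|
    (Real.sqrt_le_sqrt (div_le_div_of_nonneg_right hsecond n.cast_nonneg)).trans <|
      sqrt_exp_mul_div_le hn (Finset.sum_nonneg fun x _ => mul_nonneg (sq_nonneg _) (hp0 x))
  have htail := sum_ite_mul_le_sqrt_mul_sqrt hp0 A φ
  calc _ ≤ Real.exp (-c / 4) * √(∑ x, φ x ^ 2 * p x)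
        + 2 * (√(∑ x, φ x ^ 2 * p x) * √(∑ x, if A x then p x else 0)) :=
        htrunc.trans (add_le_add hbulk (mul_le_mul_of_nonneg_left htail zero_le_two))
    _ = _ := by ring

/-- Chatterjee–Diaconis style importance sampling L1 error bound (finite-space version). -/
theorem chatterjee_diaconis_l1_bound {X : Type*} [Fintype X] [MeasurableSpace X]
    [MeasurableSingletonClass X]
    {Ω : Type*} [MeasurableSpace Ω] (μ : Measure Ω) [IsProbabilityMeasure μ]
    (p q : X → ℝ) (φ : X → ℝ) (c : ℝ) (n : ℕ) (hn0 : 0 < n)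
    (hp0 : ∀ x, 0 ≤ p x) (hq0 : ∀ x, 0 ≤ q x)
    (hp1 : ∑ x, p x = 1) (hq1 : ∑ x, q x = 1)
    (hsupp : ∀ x, 0 < p x → 0 < q x)
    (hφ : ∀ x, φ x ∈ Set.Icc (0 : ℝ) 1)
    (hc : 0 ≤ c)
    (L : ℝ) (hL : L = ∑ x, (if p x = 0 then 0 else p x * Real.log (p x / q x)))
    (hn : Real.exp (L + c) ≤ n)
    (Xs : Fin n → Ω → X)
    (hmeas : ∀ i, Measurable (Xs i))
    (hindep : iIndepFun Xs μ)
    (hlaw : ∀ i x, μ {ω | Xs i ω = x} = ENNReal.ofReal (q x)) :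
    ∫ ω, |(1 / (n : ℝ)) * ∑ i, φ (Xs i ω) * p (Xs i ω) / q (Xs i ω)
        - ∑ x, φ x * p x| ∂μ
      ≤ Real.sqrt (∑ x, φ x ^ 2 * p x) *
        (Real.exp (-c / 4) +
          2 * Real.sqrt (∑ x, (if Real.log (p x / q x) > L + c / 2 then p x else 0))) :=
  chatterjee_diaconis_l1_bound_general μ p q φ c n hp0 hq0 hsupp hφ L hn Xs hmeas hindep hlaw
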